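/- arXiv:math/0612066 — 4 statements merged into one kernel-verified Lean document; each statement's English description precedes it below -/
import Mathlib

section
/- For λ > 0 and c ∈ ℝ, the minimum value of j(θ) = (1/2)(c - θ)² + λ|θ| over θ ∈ ℝ equals ρ_λ(c), where ρ_λ is Huber's cost function: ρ_λ(u) = u²/2 if |u| ≤ λ and ρ_λ(u) = λ|u| - λ²/2 if |u| > λ. -/
noncomputable def softThresh (lam c : ℝ) : ℝ := Real.sign c * max (|c| - lam) 0

noncomputable def huber (lam u : ℝ) : ℝ :=
  if |u| ≤ lam then u^2/2 else lam * |u| - lam^2/2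

/-! Where `|c| ≤ λ`, the quadratic branch of `huber` bounds the objective from below because
`c θ ≤ |c| |θ| ≤ λ |θ|`. The affine branch bounds it everywhere, because
`λ (|c| - |θ|) ≤ |λ| |c - θ| ≤ ((c - θ)² + λ²) / 2` by AM-GM. The soft-thresholded point attains
the bound. -/

section

variable {lam c : ℝ}

lemma sq_half_le_objective (h : |c| ≤ lam) (θ : ℝ) :
    c^2/2 ≤ (1/2) * (c - θ)^2 + lam * |θ| := by
  have hcθ : c * θ ≤ lam * |θ| :=
    calc c * θ ≤ |c| * |θ| := by rw [← abs_mul]; exact le_abs_self _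
      _ ≤ lam * |θ| := mul_le_mul_of_nonneg_right h (abs_nonneg θ)
  nlinarith [sq_nonneg θ]

lemma affine_le_objective (lam c θ : ℝ) :
    lam * |c| - lam^2/2 ≤ (1/2) * (c - θ)^2 + lam * |θ| := by
  have hdiff : lam * (|c| - |θ|) ≤ |lam| * |c - θ| :=
    calc lam * (|c| - |θ|) ≤ |lam * (|c| - |θ|)| := le_abs_self _
      _ = |lam| * |(|c| - |θ|)| := abs_mul _ _
      _ ≤ |lam| * |c - θ| :=
        mul_le_mul_of_nonneg_left (abs_abs_sub_abs_le_abs_sub c θ) (abs_nonneg _)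
  nlinarith [sq_nonneg (|lam| - |c - θ|), sq_abs lam, sq_abs (c - θ)]

lemma huber_le_objective (lam c θ : ℝ) : huber lam c ≤ (1/2) * (c - θ)^2 + lam * |θ| := by
  unfold huber
  split_ifs with h
  · exact sq_half_le_objective h θ
  · exact affine_le_objective lam c θ

lemma softThresh_eq_zero_of_abs_le (h : |c| ≤ lam) : softThresh lam c = 0 := by
  simp [softThresh, h]

lemma objective_softThresh (hlam : 0 ≤ lam) :
    (1/2) * (c - softThresh lam c)^2 + lam * |softThresh lam c| = huber lam c := by
  unfold huber
  split_ifs with h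
  · rw [softThresh_eq_zero_of_abs_le h]
    simp only [sub_zero, abs_zero, mul_zero, add_zero]
    ring
  · push Not at h
    rw [softThresh, max_eq_left (sub_nonneg.mpr h.le)]
    rcases (abs_pos.mp (hlam.trans_lt h)).lt_or_gt with hc | hc
    · rw [abs_of_neg hc] at h ⊢
      rw [Real.sign_of_neg hc, abs_of_nonpos (by linarith)]
      ring
    · rw [abs_of_pos hc] at h ⊢
      rw [Real.sign_of_pos hc, abs_of_nonneg (by linarith)]
      ring

end

theorem soft_min_value_is_huber (lam c : ℝ) (hlam : 0 < lam) :
    IsLeast (Set.range fun θ : ℝ => (1/2) * (c - θ)^2 + lam * |θ|) (huber lam c) ∧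
    (1/2) * (c - softThresh lam c)^2 + lam * |softThresh lam c| = huber lam c := by
  have hattained := objective_softThresh (c := c) hlam.le
  refine ⟨⟨⟨softThresh lam c, hattained⟩, ?_⟩, hattained⟩
  rintro _ ⟨θ, rfl⟩
  exact huber_le_objective lam c θ
end

section
/- With the setup of the penalized least-squares criterion J(β,θ) = Σᵢ (1/2)(zᵢ - Aᵢᵀβ - θᵢ)² + λΣ_{i≥i₀}|θᵢ|, the pair (β̂, θ̂) minimizes J jointly if and only if β̂ minimizes β ↦ Σ_{i≥i₀} ρ_λ(zᵢ - Aᵢᵀβ) and θ̂ᵢ = zᵢ - Aᵢᵀβ̂ for i < i₀, θ̂ᵢ = sign(zᵢ - Aᵢᵀβ̂)(|zᵢ - Aᵢᵀβ̂| - λ)₊ for i ≥ i₀. -/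
namespace Real

theorem sign_mul_self_eq_abs (r : ℝ) : sign r * r = |r| := by
  rcases lt_trichotomy r 0 with hr | rfl | hr
  · rw [sign_of_neg hr, abs_of_neg hr]; ring
  · simp
  · rw [sign_of_pos hr, abs_of_pos hr, one_mul]

theorem sign_mul_abs (r : ℝ) : sign r * |r| = r := by
  rcases lt_trichotomy r 0 with hr | rfl | hr
  · rw [sign_of_neg hr, abs_of_neg hr]; ring
  · simp
  · rw [sign_of_pos hr, abs_of_pos hr, one_mul]

theorem abs_sign_of_ne_zero {r : ℝ} (hr : r ≠ 0) : |sign r| = 1 := by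
  rcases sign_apply_eq_of_ne_zero r hr with h | h <;> simp [h]

theorem sign_mul_le_abs (r θ : ℝ) : sign r * θ ≤ |θ| := by
  rcases sign_apply_eq r with h | h | h <;> rw [h]
  · simpa using neg_le_abs θ
  · simp
  · simpa using le_abs_self θ

theorem sign_sq_of_ne_zero {r : ℝ} (hr : r ≠ 0) : sign r ^ 2 = 1 := by
  rcases sign_apply_eq_of_ne_zero r hr with h | h <;> simp [h]

end Real

theorem forall_le_iff_of_partial_min {X Y α : Type*} [Preorder α] (F : X → Y → α) (g : X → α)
    (t : X → Y) (hle : ∀ x y, g x ≤ F x y) (ht : ∀ x, F x (t x) = g x)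
    (huniq : ∀ x y, F x y ≤ g x → y = t x) (x₀ : X) (y₀ : Y) :
    (∀ x y, F x₀ y₀ ≤ F x y) ↔ (∀ x, g x₀ ≤ g x) ∧ y₀ = t x₀ := by
  constructor
  · intro hmin
    have hy₀ : y₀ = t x₀ := huniq x₀ y₀ (ht x₀ ▸ hmin x₀ (t x₀))
    refine ⟨fun x => ?_, hy₀⟩
    calc g x₀ = F x₀ y₀ := by rw [hy₀, ht]
      _ ≤ F x (t x) := hmin x (t x)
      _ = g x := ht x
  · rintro ⟨hx₀, rfl⟩ x y
    calc F x₀ (t x₀) = g x₀ := ht x₀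
      _ ≤ g x := hx₀ x
      _ ≤ F x y := hle x y

section Scalar

variable {lam : ℝ}

noncomputable def lassoObj (lam r θ : ℝ) : ℝ := 1/2 * (r - θ)^2 + lam * |θ|

theorem softThresh_of_abs_le {c : ℝ} (h : |c| ≤ lam) : softThresh lam c = 0 := by
  rw [softThresh, max_eq_right (by linarith), mul_zero]

theorem softThresh_of_lt_abs {c : ℝ} (h : lam < |c|) :
    softThresh lam c = c - lam * Real.sign c := by
  rw [softThresh, max_eq_left (by linarith), mul_sub, Real.sign_mul_abs]
  ring

theorem huber_add_sq_sub_softThresh_le_lassoObj (hlam : 0 ≤ lam) (r θ : ℝ) :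
    huber lam r + (θ - softThresh lam r)^2/2 ≤ lassoObj lam r θ := by
  unfold lassoObj huber
  by_cases h : |r| ≤ lam
  · rw [if_pos h, softThresh_of_abs_le h]
    have : r * θ ≤ lam * |θ| := (le_abs_self _).trans <| by
      rw [abs_mul]; exact mul_le_mul_of_nonneg_right h (abs_nonneg θ)
    nlinarith
  · push Not at h
    have hr : r ≠ 0 := abs_pos.mp (hlam.trans_lt h)
    rw [if_neg h.not_ge, softThresh_of_lt_abs h, ← Real.sign_mul_self_eq_abs r]
    nlinarith [Real.sign_sq_of_ne_zero hr, mul_le_mul_of_nonneg_left (Real.sign_mul_le_abs r θ) hlam]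

theorem lassoObj_softThresh (hlam : 0 ≤ lam) (r : ℝ) :
    lassoObj lam r (softThresh lam r) = huber lam r := by
  unfold lassoObj huber
  by_cases h : |r| ≤ lam
  · rw [if_pos h, softThresh_of_abs_le h, sub_zero, abs_zero, mul_zero, add_zero]
    ring
  · push Not at h
    have hr : r ≠ 0 := abs_pos.mp (hlam.trans_lt h)
    rw [if_neg h.not_ge, softThresh, max_eq_left (by linarith), abs_mul,
      Real.abs_sign_of_ne_zero hr, abs_of_nonneg (sub_nonneg.mpr h.le)]
    linear_combination ((Real.sign r * |r| - r) / 2 - Real.sign r * lam) * Real.sign_mul_abs r +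
      (lam ^ 2 / 2) * Real.sign_sq_of_ne_zero hr

end Scalar

section Vector

open Finset

variable {ι : Type*} (lam : ℝ) (P : ι → Prop) [DecidablePred P]

noncomputable def thresholded (r : ι → ℝ) (i : ι) : ℝ :=
  if P i then softThresh lam (r i) else r i

noncomputable def penalizedLoss [Fintype ι] (r θ : ι → ℝ) : ℝ :=
  ∑ i, 1/2 * (r i - θ i)^2 + lam * ∑ i ∈ univ.filter P, |θ i|

variable {lam P}

theorem eq_thresholded_iff {r θ : ι → ℝ} :
    θ = thresholded lam P r ↔
      (∀ i, ¬P i → θ i = r i) ∧ (∀ i, P i → θ i = softThresh lam (r i)) := by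
  simp only [funext_iff, thresholded]
  refine ⟨fun h => ⟨fun i hi => ?_, fun i hi => ?_⟩, fun ⟨h₁, h₂⟩ i => ?_⟩
  · simpa [hi] using h i
  · simpa [hi] using h i
  · by_cases hi : P i
    · simpa [hi] using h₂ i hi
    · simpa [hi] using h₁ i hi

variable [Fintype ι]

theorem penalizedLoss_eq_sum (r θ : ι → ℝ) :
    penalizedLoss lam P r θ =
      ∑ i, if P i then lassoObj lam (r i) (θ i) else 1/2 * (r i - θ i)^2 := by
  rw [penalizedLoss, sum_filter, mul_sum, ← sum_add_distrib]
  refine sum_congr rfl fun i _ => ?_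
  split_ifs <;> simp [lassoObj]

theorem huberSum_add_sum_sq_le_penalizedLoss (hlam : 0 ≤ lam) (r θ : ι → ℝ) :
    ∑ i ∈ univ.filter P, huber lam (r i) + ∑ i, (θ i - thresholded lam P r i)^2/2
      ≤ penalizedLoss lam P r θ := by
  rw [penalizedLoss_eq_sum, sum_filter, ← sum_add_distrib]
  refine sum_le_sum fun i _ => ?_
  by_cases hi : P i
  · simpa [thresholded, hi] using huber_add_sq_sub_softThresh_le_lassoObj hlam (r i) (θ i)
  · simp only [thresholded, hi, if_false, zero_add, sub_sq_comm (θ i)]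
    linarith

theorem huberSum_le_penalizedLoss (hlam : 0 ≤ lam) (r θ : ι → ℝ) :
    ∑ i ∈ univ.filter P, huber lam (r i) ≤ penalizedLoss lam P r θ :=
  (le_add_of_nonneg_right (by positivity)).trans (huberSum_add_sum_sq_le_penalizedLoss hlam r θ)

theorem penalizedLoss_thresholded (hlam : 0 ≤ lam) (r : ι → ℝ) :
    penalizedLoss lam P r (thresholded lam P r) = ∑ i ∈ univ.filter P, huber lam (r i) := by
  rw [penalizedLoss_eq_sum, sum_filter]
  refine sum_congr rfl fun i _ => ?_
  by_cases hi : P i <;> simp [thresholded, hi, lassoObj_softThresh hlam]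

theorem eq_thresholded_of_penalizedLoss_le (hlam : 0 ≤ lam) {r θ : ι → ℝ}
    (h : penalizedLoss lam P r θ ≤ ∑ i ∈ univ.filter P, huber lam (r i)) :
    θ = thresholded lam P r := by
  have hgap := huberSum_add_sum_sq_le_penalizedLoss (P := P) hlam r θ
  have hzero : ∑ i, (θ i - thresholded lam P r i)^2/2 = 0 :=
    le_antisymm (by linarith) (by positivity)
  funext i
  have hi := (sum_eq_zero_iff_of_nonneg (fun i _ => by positivity)).mp hzero i (mem_univ i)
  exact sub_eq_zero.mp (pow_eq_zero_iff two_ne_zero |>.mp (by linarith))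

end Vector

theorem joint_min_iff_huber_Mest
    (n p : ℕ) (lam : ℝ) (hlam : 0 < lam)
    (A : Fin n → Fin p → ℝ) (z : Fin n → ℝ) (i0 : Fin n)
    (βhat : Fin p → ℝ) (θhat : Fin n → ℝ) :
    (∀ (β : Fin p → ℝ) (θ : Fin n → ℝ),
        (∑ i, (1/2) * (z i - (∑ j, A i j * βhat j) - θhat i)^2) +
            lam * ∑ i ∈ Finset.univ.filter (fun i => i0 ≤ i), |θhat i|
          ≤ (∑ i, (1/2) * (z i - (∑ j, A i j * β j) - θ i)^2) +
            lam * ∑ i ∈ Finset.univ.filter (fun i => i0 ≤ i), |θ i|)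
    ↔
    ((∀ β : Fin p → ℝ,
        (∑ i ∈ Finset.univ.filter (fun i => i0 ≤ i),
            huber lam (z i - (∑ j, A i j * βhat j)))
          ≤ ∑ i ∈ Finset.univ.filter (fun i => i0 ≤ i),
              huber lam (z i - (∑ j, A i j * β j))) ∧
      (∀ i : Fin n, i < i0 → θhat i = z i - (∑ j, A i j * βhat j)) ∧
      (∀ i : Fin n, i0 ≤ i → θhat i = softThresh lam (z i - (∑ j, A i j * βhat j)))) := by
  -- `(z - A *ᵥ β) i` unfolds to `z i - ∑ j, A i j * β j`, so `key` is the claim up to defeq.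
  have key := forall_le_iff_of_partial_min
    (fun β θ => penalizedLoss lam (i0 ≤ ·) (z - Matrix.mulVec A β) θ)
    (fun β => ∑ i ∈ Finset.univ.filter (i0 ≤ ·), huber lam ((z - Matrix.mulVec A β) i))
    (fun β => thresholded lam (i0 ≤ ·) (z - Matrix.mulVec A β))
    (fun β θ => huberSum_le_penalizedLoss hlam.le (z - Matrix.mulVec A β) θ)
    (fun β => penalizedLoss_thresholded hlam.le (z - Matrix.mulVec A β))
    (fun β _ => eq_thresholded_of_penalizedLoss_le hlam.le (r := z - Matrix.mulVec A β))
    βhat θhat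
  rw [eq_thresholded_iff] at key
  simp only [not_le] at key
  exact key
end

section
/- Let C ⊆ ℝᵐ be an open convex set and let (fₙ) be a sequence of finite convex functions on C converging pointwise to a finite convex function f on C. Then the convergence is uniform on every compact subset of C. -/
open Set Metric Filter

private lemma coord_dist_le {m : ℕ} (y x : EuclideanSpace ℝ (Fin m)) (i : Fin m) :
    dist (y i) (x i) ≤ dist y x := by
  have h2 : dist (y i) (x i) ^ 2 ≤ ∑ j, dist (y j) (x j) ^ 2 :=
    Finset.single_le_sum (f := fun j => dist (y j) (x j) ^ 2)
      (fun j _ => sq_nonneg _) (Finset.mem_univ i)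
  rw [EuclideanSpace.dist_eq]
  exact (Real.sqrt_sq dist_nonneg).symm.trans_le (Real.sqrt_le_sqrt h2)

private lemma ball_subset_hull {m : ℕ} (x : EuclideanSpace ℝ (Fin m)) {a : ℝ} (ha : 0 ≤ a) :
    closedBall x a ⊆
      convexHull ℝ (WithLp.ofLp ⁻¹' Set.pi univ (fun i => ({x i - a, x i + a} : Set ℝ)) :
        Set (EuclideanSpace ℝ (Fin m))) := by
  intro y hy
  suffices hs : WithLp.ofLp y ∈ convexHull ℝ (Set.pi univ (fun i => ({x i - a, x i + a} : Set ℝ))) by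
    have key := LinearMap.image_convexHull (WithLp.linearEquiv 2 ℝ (Fin m → ℝ)).symm.toLinearMap
      (Set.pi univ (fun i => ({x i - a, x i + a} : Set ℝ)))
    have heq : (WithLp.ofLp ⁻¹' Set.pi univ (fun i => ({x i - a, x i + a} : Set ℝ)) :
        Set (EuclideanSpace ℝ (Fin m))) = (WithLp.linearEquiv 2 ℝ (Fin m → ℝ)).symm.toLinearMap ''
          (Set.pi univ (fun i => ({x i - a, x i + a} : Set ℝ))) := by
      ext z
      constructor
      · intro hz
        exact ⟨WithLp.ofLp z, hz, rfl⟩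
      · rintro ⟨w, hw, rfl⟩
        exact hw
    rw [heq, ← key]
    exact ⟨_, hs, rfl⟩
  refine mem_convexHull_pi fun i _ => ?_
  rw [convexHull_pair, segment_eq_Icc (by linarith : x i - a ≤ x i + a)]
  have h1 : dist (y i) (x i) ≤ a := (coord_dist_le y x i).trans (mem_closedBall.mp hy)
  rw [Real.dist_eq, abs_le] at h1
  exact ⟨by linarith [h1.1], by linarith [h1.2]⟩

private lemma local_unif {m : ℕ} {C : Set (EuclideanSpace ℝ (Fin m))}
    (hopen : IsOpen C)
    {f : ℕ → EuclideanSpace ℝ (Fin m) → ℝ} {g : EuclideanSpace ℝ (Fin m) → ℝ}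
    (hconv : ∀ n, ConvexOn ℝ C (f n)) (hg : ConvexOn ℝ C g)
    (hpt : ∀ x ∈ C, Filter.Tendsto (fun n => f n x) Filter.atTop (nhds (g x)))
    {x : EuclideanSpace ℝ (Fin m)} (hx : x ∈ C) :
    ∃ r > 0, TendstoUniformlyOn f g Filter.atTop (closedBall x r) := by
  obtain ⟨R, hR, hRC⟩ : ∃ R > 0, closedBall x R ⊆ C := by
    obtain ⟨R, hR, h⟩ := Metric.isOpen_iff.1 hopen x hx
    exact ⟨R / 2, by linarith, (closedBall_subset_ball (by linarith)).trans h⟩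
  set a : ℝ := R / (m + 1) with ha_def
  have ha : 0 < a := by positivity
  have haR : a ≤ R := div_le_self hR.le (by exact_mod_cast Nat.le_add_left 1 m)
  have hballC : closedBall x a ⊆ C := (closedBall_subset_closedBall haR).trans hRC
  -- the cube vertices
  set V : Set (EuclideanSpace ℝ (Fin m)) :=
    WithLp.ofLp ⁻¹' Set.pi univ (fun i => ({x i - a, x i + a} : Set ℝ)) with hV_def
  have hVfin : V.Finite := (Set.Finite.pi fun _ => (Set.finite_singleton _).insert _).preimage
    (WithLp.ofLp_injective 2).injOn
  have hVC : V ⊆ C := by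
    intro v hv
    apply hRC
    rw [mem_closedBall, EuclideanSpace.dist_eq]
    have hterm : ∀ j, dist (v j) (x j) ^ 2 ≤ a ^ 2 := by
      intro j
      have := hv j (Set.mem_univ j)
      simp only [Set.mem_insert_iff, Set.mem_singleton_iff] at this
      rcases this with h | h <;> rw [Real.dist_eq, h, sq_abs] <;> nlinarith [ha.le]
    have hsum : ∑ j, dist (v j) (x j) ^ 2 ≤ (m : ℝ) * a ^ 2 := by
      calc ∑ j, dist (v j) (x j) ^ 2 ≤ ∑ _j : Fin m, a ^ 2 :=
            Finset.sum_le_sum fun j _ => hterm j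
        _ = (m : ℝ) * a ^ 2 := by simp [Finset.sum_const, Finset.card_univ]
    have hma : (m : ℝ) * a ^ 2 ≤ R ^ 2 := by
      have haR1 : a * ((m : ℝ) + 1) = R := by
        rw [ha_def]; field_simp
      nlinarith [ha.le, hR.le, sq_nonneg a]
    calc √(∑ j, dist (v j) (x j) ^ 2) ≤ √(R ^ 2) :=
          Real.sqrt_le_sqrt (hsum.trans hma)
      _ = R := Real.sqrt_sq hR.le
  have hhull : closedBall x a ⊆ convexHull ℝ V := ball_subset_hull x ha.le
  -- uniform upper bound at vertices
  have hMv : ∀ v ∈ V, ∃ M : ℝ, (∀ n, f n v ≤ M) ∧ g v ≤ M := by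
    intro v hv
    obtain ⟨M, hM⟩ := (hpt v (hVC hv)).bddAbove_range
    exact ⟨max M (g v), fun n => le_max_of_le_left (hM (Set.mem_range_self n)),
      le_max_right _ _⟩
  choose! Mv hMv1 hMv2 using hMv
  obtain ⟨M₀, hM₀⟩ := (hVfin.image Mv).bddAbove
  have hub : ∀ n, ∀ y ∈ closedBall x a, f n y ≤ M₀ := by
    intro n y hy
    obtain ⟨v, hv, hle⟩ := (hconv n).exists_ge_of_mem_convexHull hVC (hhull hy)
    exact hle.trans ((hMv1 v hv n).trans (hM₀ ⟨v, hv, rfl⟩))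
  have hubg : ∀ y ∈ closedBall x a, g y ≤ M₀ := by
    intro y hy
    obtain ⟨v, hv, hle⟩ := hg.exists_ge_of_mem_convexHull hVC (hhull hy)
    exact hle.trans ((hMv2 v hv).trans (hM₀ ⟨v, hv, rfl⟩))
  -- uniform lower bound via reflection
  obtain ⟨B₀, hB₀⟩ := (hpt x hx).bddBelow_range
  set B : ℝ := min B₀ (g x) with hB_def
  have hBf : ∀ n, B ≤ f n x := fun n =>
    (min_le_left _ _).trans (hB₀ (Set.mem_range_self n))
  have hBg : B ≤ g x := min_le_right _ _
  have hrefl : ∀ y ∈ closedBall x a,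
      ((2 : ℝ) • x - y) ∈ closedBall x a ∧
      ((1 : ℝ)/2) • y + ((1 : ℝ)/2) • ((2 : ℝ) • x - y) = x := by
    intro y hy
    constructor
    · rw [mem_closedBall, dist_eq_norm]
      have h2 : (2 : ℝ) • x - y - x = x - y := by module
      rw [h2, ← dist_eq_norm, dist_comm]
      exact mem_closedBall.mp hy
    · module
  have hlb : ∀ n, ∀ y ∈ closedBall x a, 2 * B - M₀ ≤ f n y := by
    intro n y hy
    obtain ⟨hz, hmid⟩ := hrefl y hy
    have hcomb := (hconv n).2 (hballC hy) (hballC hz)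
      (by norm_num : (0:ℝ) ≤ 1/2) (by norm_num : (0:ℝ) ≤ 1/2) (by norm_num)
    rw [hmid, smul_eq_mul, smul_eq_mul] at hcomb
    have h1 := hBf n
    have h2 := hub n _ hz
    linarith
  have hlbg : ∀ y ∈ closedBall x a, 2 * B - M₀ ≤ g y := by
    intro y hy
    obtain ⟨hz, hmid⟩ := hrefl y hy
    have hcomb := hg.2 (hballC hy) (hballC hz)
      (by norm_num : (0:ℝ) ≤ 1/2) (by norm_num : (0:ℝ) ≤ 1/2) (by norm_num)
    rw [hmid, smul_eq_mul, smul_eq_mul] at hcomb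
    have h2 := hubg _ hz
    linarith [hBg]
  set M : ℝ := max M₀ (M₀ - 2 * B) with hM_def
  have habs : ∀ n, ∀ y, dist y x < a → |f n y| ≤ M := by
    intro n y hy
    have hy' : y ∈ closedBall x a := mem_closedBall.mpr hy.le
    rw [abs_le]
    constructor
    · have h := hlb n y hy'
      have hM' : M₀ - 2 * B ≤ M := le_max_right _ _
      linarith
    · exact (hub n y hy').trans (le_max_left _ _)
  have habsg : ∀ y, dist y x < a → |g y| ≤ M := by
    intro y hy
    have hy' : y ∈ closedBall x a := mem_closedBall.mpr hy.le
    rw [abs_le]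
    constructor
    · have h := hlbg y hy'
      have hM' : M₀ - 2 * B ≤ M := le_max_right _ _
      linarith
    · exact (hubg y hy').trans (le_max_left _ _)
  -- equi-Lipschitz on ball x (a/2)
  set L : NNReal := (2 * M / (a / 2)).toNNReal with hL_def
  have haa : a - a / 2 = a / 2 := by ring
  have hfL : ∀ n, LipschitzOnWith L (f n) (ball x (a / 2)) := by
    intro n
    have := ((hconv n).subset (ball_subset_closedBall.trans hballC)
      (convex_ball x a)).lipschitzOnWith_of_abs_le (by positivity : (0:ℝ) < a / 2)
      (habs n)
    rwa [haa] at this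
  have hgL : LipschitzOnWith L g (ball x (a / 2)) := by
    have := (hg.subset (ball_subset_closedBall.trans hballC)
      (convex_ball x a)).lipschitzOnWith_of_abs_le (by positivity : (0:ℝ) < a / 2)
      habsg
    rwa [haa] at this
  -- conclude uniform convergence on closedBall x (a/4)
  refine ⟨a / 4, by positivity, ?_⟩
  have hsub : closedBall x (a / 4) ⊆ ball x (a / 2) :=
    closedBall_subset_ball (by linarith)
  rw [Metric.tendstoUniformlyOn_iff]
  intro ε hε
  set δ : ℝ := ε / (3 * ((L : ℝ) + 1)) with hδ_def
  have hL1 : (0 : ℝ) < (L : ℝ) + 1 := by positivity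
  have hδ : 0 < δ := by positivity
  have hLδ : (L : ℝ) * δ ≤ ε / 3 := by
    calc (L : ℝ) * δ ≤ ((L : ℝ) + 1) * δ :=
          mul_le_mul_of_nonneg_right (by linarith) hδ.le
      _ = ε / 3 := by rw [hδ_def]; field_simp
  obtain ⟨t, hts, htfin, hcov⟩ :=
    finite_cover_balls_of_compact (isCompact_closedBall x (a / 4)) hδ
  have hev : ∀ᶠ n in atTop, ∀ p ∈ t, dist (f n p) (g p) < ε / 3 := by
    rw [htfin.eventually_all]
    intro p hp
    have hpC : p ∈ C := hballC ((closedBall_subset_closedBall (by linarith)) (hts hp))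
    exact (Metric.tendsto_nhds.mp (hpt p hpC)) (ε / 3) (by positivity)
  filter_upwards [hev] with n hn y hy
  obtain ⟨p, hp, hyp⟩ := Set.mem_iUnion₂.mp (hcov hy)
  have hy2 : y ∈ ball x (a / 2) := hsub hy
  have hp2 : p ∈ ball x (a / 2) := hsub (hts hp)
  have h1 : dist (g y) (g p) ≤ (L : ℝ) * dist y p := hgL.dist_le_mul y hy2 p hp2
  have h2 : dist (f n y) (f n p) ≤ (L : ℝ) * dist y p := (hfL n).dist_le_mul y hy2 p hp2
  have hyp' : dist y p < δ := mem_ball.mp hyp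
  have hLyp : (L : ℝ) * dist y p ≤ ε / 3 := by
    calc (L : ℝ) * dist y p ≤ (L : ℝ) * δ :=
          mul_le_mul_of_nonneg_left hyp'.le (by positivity)
      _ ≤ ε / 3 := hLδ
  calc dist (g y) (f n y) ≤ dist (g y) (g p) + dist (g p) (f n p) + dist (f n p) (f n y) :=
        dist_triangle4 _ _ _ _
    _ < ε / 3 + ε / 3 + ε / 3 := by
        have := hn p hp
        rw [dist_comm (g p) (f n p)]
        have h2' : dist (f n p) (f n y) ≤ ε / 3 := by
          rw [dist_comm]; exact h2.trans hLyp
        have h1' : dist (g y) (g p) ≤ ε / 3 := h1.trans hLyp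
        linarith
    _ = ε := by ring

theorem convex_pointwise_to_locally_uniform
    (m : ℕ) (C : Set (EuclideanSpace ℝ (Fin m)))
    (hopen : IsOpen C) (hconvC : Convex ℝ C)
    (f : ℕ → EuclideanSpace ℝ (Fin m) → ℝ) (g : EuclideanSpace ℝ (Fin m) → ℝ)
    (hconv : ∀ n, ConvexOn ℝ C (f n)) (hg : ConvexOn ℝ C g)
    (hpt : ∀ x ∈ C, Filter.Tendsto (fun n => f n x) Filter.atTop (nhds (g x))) :
    ∀ K ⊆ C, IsCompact K → TendstoUniformlyOn f g Filter.atTop K := by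
  rw [← tendstoLocallyUniformlyOn_iff_forall_isCompact hopen]
  intro u hu x hx
  obtain ⟨r, hr, hunif⟩ := local_unif hopen hconv hg hpt hx
  exact ⟨closedBall x r, mem_nhdsWithin_of_mem_nhds (closedBall_mem_nhds x hr), hunif u hu⟩
end

section
/- Let C ⊆ ℝᵐ be open and convex, (fₙ) differentiable convex functions on C, f differentiable convex on C, and suppose fₙ → f pointwise on C. Then ∇fₙ → ∇f pointwise on C, and the convergence of gradients is uniform on every compact subset of C. -/
open Filter

variable {E : Type*} [NormedAddCommGroup E] [NormedSpace ℝ E]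

/-- Gradient inequality for convex differentiable functions. -/
lemma grad_ineq {C : Set E} {f : E → ℝ} (hf : ConvexOn ℝ C f) {x y : E}
    (hx : x ∈ C) (hy : y ∈ C) (hd : DifferentiableAt ℝ f x) :
    f x + fderiv ℝ f x (y - x) ≤ f y := by
  have h0 : x + (0:ℝ) • (y - x) = x := by simp
  have hc : HasDerivAt (fun t : ℝ => x + t • (y - x)) (y - x) 0 := by
    simpa using ((hasDerivAt_id (0:ℝ)).smul_const (y - x)).const_add x
  have hd' : HasFDerivAt f (fderiv ℝ f x) (x + (0:ℝ) • (y - x)) := by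
    rw [h0]; exact hd.hasFDerivAt
  have hφ : HasDerivAt (fun t : ℝ => f (x + t • (y - x))) (fderiv ℝ f x (y - x)) 0 :=
    hd'.comp_hasDerivAt 0 hc
  have hslope : ∀ t ∈ Set.Ioc (0:ℝ) 1,
      (f (x + t • (y - x)) - f x) / t ≤ f y - f x := by
    intro t ht
    have hcomb : x + t • (y - x) = (1 - t) • x + t • y := by
      rw [sub_smul, smul_sub, one_smul]; abel
    have h2 := hf.2 hx hy (by linarith [ht.2] : (0:ℝ) ≤ 1 - t) (le_of_lt ht.1) (by ring)
    rw [← hcomb] at h2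
    simp only [smul_eq_mul] at h2
    rw [div_le_iff₀ ht.1]
    nlinarith [ht.1]
  have htend : Tendsto (fun t : ℝ => (f (x + t • (y - x)) - f x) / t)
      (nhdsWithin 0 (Set.Ioi 0)) (nhds (fderiv ℝ f x (y - x))) := by
    have h1 := hasDerivAt_iff_tendsto_slope.mp hφ
    have h2 : Tendsto (slope (fun t : ℝ => f (x + t • (y - x))) 0)
        (nhdsWithin 0 (Set.Ioi 0)) (nhds (fderiv ℝ f x (y - x))) :=
      h1.mono_left (nhdsWithin_mono _ fun t ht => ne_of_gt ht)
    refine h2.congr fun t => ?_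
    simp [slope_def_field, h0, div_eq_inv_mul]
  have key : fderiv ℝ f x (y - x) ≤ f y - f x := by
    refine le_of_tendsto htend ?_
    filter_upwards [Ioc_mem_nhdsGT_of_mem (by norm_num : (0:ℝ) ∈ Set.Ico (0:ℝ) 1)] with t ht
    exact hslope t ht
  linarith

lemma subgrad_unique {f : E → ℝ} {x : E} {v : E →L[ℝ] ℝ} {r : ℝ} (hr : 0 < r)
    (hd : DifferentiableAt ℝ f x)
    (h : ∀ y ∈ Metric.closedBall x r, f x + v (y - x) ≤ f y) :
    v = fderiv ℝ f x := by
  have hψd : HasFDerivAt (fun y => f y - v (y - x)) (fderiv ℝ f x - v) x := by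
    have h2 : HasFDerivAt (fun y : E => v (y - x)) v x := by
      have : (fun y : E => v (y - x)) = fun y => v y - v x := by
        ext y; rw [map_sub]
      rw [this]
      exact v.hasFDerivAt.sub_const (v x)
    exact hd.hasFDerivAt.sub h2
  have hmin : IsLocalMin (fun y => f y - v (y - x)) x := by
    filter_upwards [Metric.closedBall_mem_nhds x hr] with y hy
    have := h y hy
    simp only [sub_self, map_zero, sub_zero]
    linarith
  have := hmin.hasFDerivAt_eq_zero hψd
  have : fderiv ℝ f x = v := by
    rwa [sub_eq_zero] at this
  exact this.symm

lemma core [FiniteDimensional ℝ E] {C : Set E} (hopen : IsOpen C)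
    {h : ℕ → E → ℝ} {g : E → ℝ}
    (hdiff : ∀ k, ∀ y ∈ C, DifferentiableAt ℝ (h k) y)
    (hgdiff : ∀ y ∈ C, DifferentiableAt ℝ g y)
    (hconv : ∀ k, ConvexOn ℝ C (h k))
    (hpt : ∀ y ∈ C, Tendsto (fun k => h k y) atTop (nhds (g y)))
    {x : E} (hx : x ∈ C) {xs : ℕ → E} (hxs : Tendsto xs atTop (nhds x)) :
    Tendsto (fun k => fderiv ℝ (h k) (xs k)) atTop (nhds (fderiv ℝ g x)) := by
  classical
  set F : E → ℝ := fun y => ⨆ k, h k y with hF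
  have hbdd : ∀ y ∈ C, BddAbove (Set.range fun k => h k y) := fun y hy =>
    (hpt y hy).bddAbove_range
  have hFconv : ConvexOn ℝ C F := by
    refine ⟨(hconv 0).1, fun y hy z hz a b ha hb hab => ?_⟩
    refine ciSup_le fun k => le_trans ((hconv k).2 hy hz ha hb hab) ?_
    have h1 : h k y ≤ F y := le_ciSup (hbdd y hy) k
    have h2 : h k z ≤ F z := le_ciSup (hbdd z hz) k
    simp only [smul_eq_mul]
    nlinarith
  have hFcont : ContinuousAt F x :=
    (hFconv.continuousOn hopen).continuousAt (hopen.mem_nhds hx)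
  -- find radius
  have hev : ∀ᶠ y in nhds x, F y < F x + 1 ∧ y ∈ C :=
    (hFcont.eventually_lt_const (lt_add_one (F x))).and (hopen.mem_nhds hx)
  obtain ⟨ε, hε, hball⟩ := Metric.eventually_nhds_iff.mp hev
  set r : ℝ := ε / 3 with hrdef
  have hr : 0 < r := by positivity
  set M : ℝ := F x + 1 with hM
  have hsub2 : ∀ y ∈ Metric.closedBall x (2 * r), F y < M ∧ y ∈ C := by
    intro y hy
    rw [Metric.mem_closedBall] at hy
    refine hball ?_
    simp only [hrdef] at hy
    linarith
  have hsubC : ∀ y ∈ Metric.closedBall x (2 * r), y ∈ C := fun y hy => (hsub2 y hy).2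
  have hrsub : Metric.closedBall x r ⊆ Metric.closedBall x (2 * r) :=
    Metric.closedBall_subset_closedBall (by linarith)
  have hub : ∀ y ∈ Metric.closedBall x (2 * r), ∀ k, h k y ≤ M := by
    intro y hy k
    exact le_trans (le_ciSup (hbdd y (hsubC y hy)) k) (le_of_lt (hsub2 y hy).1)
  obtain ⟨L, hL⟩ := (hpt x hx).bddBelow_range
  have hLx : ∀ k, L ≤ h k x := fun k => hL ⟨k, rfl⟩
  have hxmem : x ∈ Metric.closedBall x (2 * r) := Metric.mem_closedBall_self (by linarith)
  have hLM : L ≤ M := le_trans (hLx 0) (hub x hxmem 0)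
  have hlb : ∀ y ∈ Metric.closedBall x r, ∀ k, 2 * L - M ≤ h k y := by
    intro y hy k
    have hz : x + (x - y) ∈ Metric.closedBall x (2 * r) := by
      rw [Metric.mem_closedBall] at hy ⊢
      have : dist (x + (x - y)) x = dist x y := by
        rw [dist_eq_norm, dist_eq_norm]; simp
      rw [this, dist_comm]; linarith
    have hcomb : (1/2 : ℝ) • y + (1/2 : ℝ) • (x + (x - y)) = x := by
      rw [smul_add, smul_sub]
      module
    have := (hconv k).2 (hsubC y (hrsub hy)) (hsubC _ hz)
      (by norm_num : (0:ℝ) ≤ 1/2) (by norm_num : (0:ℝ) ≤ 1/2) (by norm_num)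
    rw [hcomb] at this
    have h2 : h k (x + (x - y)) ≤ M := hub _ hz k
    have h3 : L ≤ h k x := hLx k
    simp only [smul_eq_mul] at this
    linarith
  set B : ℝ := 2 * (M - L) / r with hBdef
  have hBnn : 0 ≤ B := by
    apply div_nonneg _ (le_of_lt hr); linarith
  have hgradb : ∀ k, ∀ y ∈ Metric.closedBall x r, ‖fderiv ℝ (h k) y‖ ≤ B := by
    intro k y hy
    have hyC : y ∈ C := hsubC y (hrsub hy)
    refine ContinuousLinearMap.opNorm_le_bound _ hBnn fun u => ?_
    rcases eq_or_ne u 0 with rfl | hu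
    · simp
    have hun : 0 < ‖u‖ := norm_pos_iff.mpr hu
    have key : ∀ w : E, ‖w‖ = r → fderiv ℝ (h k) y w ≤ 2 * (M - L) := by
      intro w hw
      have hzmem : y + w ∈ Metric.closedBall x (2 * r) := by
        rw [Metric.mem_closedBall]
        calc dist (y + w) x ≤ dist (y + w) y + dist y x := dist_triangle _ _ _
          _ ≤ r + r := by
              rw [dist_eq_norm]
              simp only [add_sub_cancel_left]
              exact add_le_add (le_of_eq hw) (Metric.mem_closedBall.mp hy)
          _ = 2 * r := by ring
      have hgi := grad_ineq (hconv k) hyC (hsubC _ hzmem) (hdiff k y hyC)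
      simp only [add_sub_cancel_left] at hgi
      have h1 : h k (y + w) ≤ M := hub _ hzmem k
      have h2 : 2 * L - M ≤ h k y := hlb y hy k
      linarith
    have hBu : ∀ w : E, ‖w‖ = ‖u‖ → fderiv ℝ (h k) y w ≤ B * ‖u‖ := by
      intro w hw
      have hkey := key ((r / ‖u‖) • w) (by
        rw [norm_smul, Real.norm_eq_abs, abs_of_pos (by positivity), hw]
        field_simp)
      rw [map_smul, smul_eq_mul] at hkey
      have h1' : r * fderiv ℝ (h k) y w ≤ 2 * (M - L) * ‖u‖ := by
        have := mul_le_mul_of_nonneg_right hkey (norm_nonneg u)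
        calc r * fderiv ℝ (h k) y w = r / ‖u‖ * fderiv ℝ (h k) y w * ‖u‖ := by
              field_simp
          _ ≤ 2 * (M - L) * ‖u‖ := this
      rw [hBdef, div_mul_eq_mul_div, le_div_iff₀ hr]
      linarith
    rw [Real.norm_eq_abs, abs_le]
    constructor
    · have := hBu (-u) (norm_neg u)
      rw [map_neg] at this
      linarith
    · exact hBu u rfl
  -- equi-Lipschitz on the ball
  have hlip : ∀ k, ∀ y ∈ Metric.closedBall x r, ∀ z ∈ Metric.closedBall x r,
      ‖h k y - h k z‖ ≤ B * ‖y - z‖ := by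
    intro k y hy z hz
    exact (convex_closedBall x r).norm_image_sub_le_of_norm_fderiv_le
      (fun w hw => hdiff k w (hsubC w (hrsub hw)))
      (fun w hw => hgradb k w hw) hz hy
  have hmem : ∀ᶠ k in atTop, xs k ∈ Metric.closedBall x r :=
    hxs.eventually_mem (Metric.closedBall_mem_nhds x hr)
  -- values at moving points converge
  have hval : Tendsto (fun k => h k (xs k)) atTop (nhds (g x)) := by
    rw [tendsto_iff_dist_tendsto_zero]
    apply squeeze_zero' (Eventually.of_forall fun _ => dist_nonneg)
    · filter_upwards [hmem] with k hk
      calc dist (h k (xs k)) (g x) ≤ dist (h k (xs k)) (h k x) + dist (h k x) (g x) :=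
            dist_triangle _ _ _
        _ ≤ B * ‖xs k - x‖ + dist (h k x) (g x) := by
            refine add_le_add ?_ le_rfl
            rw [dist_eq_norm]
            exact hlip k (xs k) hk x (Metric.mem_closedBall_self (le_of_lt hr))
    · have h1 : Tendsto (fun k => B * ‖xs k - x‖) atTop (nhds 0) := by
        have h0 : Tendsto (fun k => ‖xs k - x‖) atTop (nhds 0) := by
          simpa using (tendsto_sub_nhds_zero_iff.mpr hxs).norm
        simpa using h0.const_mul B
      have h2 : Tendsto (fun k => dist (h k x) (g x)) atTop (nhds 0) :=
        tendsto_iff_dist_tendsto_zero.mp (hpt x hx)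
      simpa using h1.add h2
  -- main subsequence argument
  apply tendsto_of_subseq_tendsto
  intro ns hns
  have hnsmem : ∀ᶠ j in atTop, xs (ns j) ∈ Metric.closedBall x r := hns.eventually hmem
  have hfreq : ∃ᶠ j in atTop,
      fderiv ℝ (h (ns j)) (xs (ns j)) ∈ Metric.closedBall (0 : E →L[ℝ] ℝ) B := by
    refine (hnsmem.mono fun j hj => ?_).frequently
    rw [Metric.mem_closedBall, dist_zero_right]
    exact hgradb (ns j) _ hj
  obtain ⟨v, _, φ, hφ, hvt⟩ :=
    (ProperSpace.isCompact_closedBall (0 : E →L[ℝ] ℝ) B).tendsto_subseq' hfreq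
  have htt : Tendsto (fun j => ns (φ j)) atTop atTop := hns.comp hφ.tendsto_atTop
  have hveq : v = fderiv ℝ g x := by
    refine subgrad_unique hr (hgdiff x hx) fun y hy => ?_
    have hyC : y ∈ C := hsubC y (hrsub hy)
    have hA : Tendsto (fun j => h (ns (φ j)) (xs (ns (φ j)))) atTop (nhds (g x)) :=
      hval.comp htt
    have harg : Tendsto (fun j => y - xs (ns (φ j))) atTop (nhds (y - x)) :=
      tendsto_const_nhds.sub (hxs.comp htt)
    have hB2 : Tendsto (fun j => fderiv ℝ (h (ns (φ j))) (xs (ns (φ j))) (y - xs (ns (φ j))))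
        atTop (nhds (v (y - x))) := by
      have hcont : Continuous fun p : (E →L[ℝ] ℝ) × E => p.1 p.2 :=
        (isBoundedBilinearMap_apply (𝕜 := ℝ) (E := E) (F := ℝ)).continuous
      exact (hcont.tendsto (v, y - x)).comp (hvt.prodMk_nhds harg)
    have hC2 : Tendsto (fun j => h (ns (φ j)) y) atTop (nhds (g y)) := (hpt y hyC).comp htt
    refine le_of_tendsto_of_tendsto (hA.add hB2) hC2 ?_
    filter_upwards [htt.eventually hmem] with j hj
    have hjC : xs (ns (φ j)) ∈ C := hsubC _ (hrsub hj)
    exact grad_ineq (hconv (ns (φ j))) hjC hyC (hdiff _ _ hjC)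
  exact ⟨φ, hveq ▸ hvt⟩

theorem convex_gradients_converge
    (m : ℕ) (C : Set (EuclideanSpace ℝ (Fin m)))
    (hopen : IsOpen C) (hconvC : Convex ℝ C)
    (f : ℕ → EuclideanSpace ℝ (Fin m) → ℝ) (g : EuclideanSpace ℝ (Fin m) → ℝ)
    (hdiff : ∀ n, ∀ x ∈ C, DifferentiableAt ℝ (f n) x)
    (hgdiff : ∀ x ∈ C, DifferentiableAt ℝ g x)
    (hconv : ∀ n, ConvexOn ℝ C (f n)) (hg : ConvexOn ℝ C g)
    (hpt : ∀ x ∈ C, Tendsto (fun n => f n x) atTop (nhds (g x))) :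
    (∀ x ∈ C, Tendsto (fun n => fderiv ℝ (f n) x) atTop (nhds (fderiv ℝ g x))) ∧
    (∀ K ⊆ C, IsCompact K →
      TendstoUniformlyOn (fun n x => fderiv ℝ (f n) x) (fun x => fderiv ℝ g x) atTop K) := by
  constructor
  · intro x hx
    exact core hopen hdiff hgdiff hconv hpt hx (tendsto_const_nhds (x := x))
  · intro K hK hKc
    by_contra hcon
    rw [Metric.tendstoUniformlyOn_iff] at hcon
    push_neg at hcon
    obtain ⟨ε, hε, hfreq⟩ := hcon
    have hfreq' : ∃ᶠ n in atTop, ∃ y ∈ K, ε ≤ dist (fderiv ℝ g y) (fderiv ℝ (f n) y) := by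
      refine hfreq.mono fun n hn => ?_
      obtain ⟨y, hyK, hy⟩ := hn
      exact ⟨y, hyK, hy⟩
    obtain ⟨ns, hns, hprop⟩ := extraction_of_frequently_atTop hfreq'
    choose ys hysK hysd using hprop
    obtain ⟨x₀, hx₀K, φ, hφ, hyt⟩ := hKc.tendsto_subseq hysK
    have hx₀C : x₀ ∈ C := hK hx₀K
    have htt : Tendsto (fun j => ns (φ j)) atTop atTop :=
      hns.tendsto_atTop.comp hφ.tendsto_atTop
    have h1 : Tendsto (fun j => fderiv ℝ (f (ns (φ j))) (ys (φ j))) atTop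
        (nhds (fderiv ℝ g x₀)) := by
      refine core hopen (h := fun j => f (ns (φ j))) (fun j y hy => hdiff _ y hy) hgdiff
        (fun j => hconv _) ?_ hx₀C hyt
      intro y hy
      exact (hpt y hy).comp htt
    have h2 : Tendsto (fun j => fderiv ℝ g (ys (φ j))) atTop (nhds (fderiv ℝ g x₀)) := by
      refine core hopen (h := fun _ => g) (fun _ y hy => hgdiff y hy) hgdiff
        (fun _ => hg) (fun y hy => tendsto_const_nhds) hx₀C hyt
    have hd0 : Tendsto (fun j => dist (fderiv ℝ g (ys (φ j)))
        (fderiv ℝ (f (ns (φ j))) (ys (φ j)))) atTop (nhds 0) := by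
      have := h2.dist h1
      simpa using this
    have := (hd0.eventually_lt_const hε).exists
    obtain ⟨j, hj⟩ := this
    exact absurd (hysd (φ j)) (not_le.mpr hj)
end
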